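/- Let κ, λ ∈ K, (A, μ, α, β) a BiHom-commutative BiHom-associative algebra, ξ: A → A an algebra map, and 𝔇 a λ-(ξ,ξ)-derivation, with α, β, ξ, 𝔇 pairwise commuting. Define a * b := ξ(a)𝔇(b) + κ ξ(a)ξ(b). Then (A, *, αξ, βξ) is a BiHom-pre-Lie algebra and a BiHom-Novikov algebra. -/
import Mathlib


/-- (Left) BiHom-pre-Lie algebra `(A, c, α, β)`. -/
def BHPreLie {K A : Type*} [Field K] [AddCommGroup A] [Module K A]
    (c : A →ₗ[K] A →ₗ[K] A) (α β : A →ₗ[K] A) : Prop :=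
  (∀ a, α (β a) = β (α a)) ∧
  (∀ a b, α (c a b) = c (α a) (α b)) ∧
  (∀ a b, β (c a b) = c (β a) (β b)) ∧
  (∀ a b x, c (α (β a)) (c (α b) x) - c (c (β a) (α b)) (β x) =
    c (α (β b)) (c (α a) x) - c (c (β b) (α a)) (β x))

/-- BiHom-Novikov algebra: BiHom-pre-Lie plus `(a*β(b))*αβ(c) = (a*β(c))*αβ(b)`. -/
def BHNovikov {K A : Type*} [Field K] [AddCommGroup A] [Module K A]
    (c : A →ₗ[K] A →ₗ[K] A) (α β : A →ₗ[K] A) : Prop :=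
  BHPreLie c α β ∧
  (∀ a b x, c (c a (β b)) (α (β x)) = c (c a (β x)) (α (β b)))

/-- BiHom-pre-Lie bimodule over a BiHom-pre-Lie algebra `(A, c, α, β)`. -/
def BHPreLieBimod {K A M : Type*} [Field K] [AddCommGroup A] [Module K A]
    [AddCommGroup M] [Module K M]
    (c : A →ₗ[K] A →ₗ[K] A) (α β : A →ₗ[K] A)
    (cl : A →ₗ[K] M →ₗ[K] M) (cr : M →ₗ[K] A →ₗ[K] M)
    (αM βM : M →ₗ[K] M) : Prop :=
  (∀ m, αM (βM m) = βM (αM m)) ∧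
  (∀ a m, αM (cl a m) = cl (α a) (αM m)) ∧
  (∀ m a, αM (cr m a) = cr (αM m) (α a)) ∧
  (∀ a m, βM (cl a m) = cl (β a) (βM m)) ∧
  (∀ m a, βM (cr m a) = cr (βM m) (β a)) ∧
  (∀ a b m, cl (α (β a)) (cl (α b) m) - cl (c (β a) (α b)) (βM m) =
    cl (α (β b)) (cl (α a) m) - cl (c (β b) (α a)) (βM m)) ∧
  (∀ a m x, cl (α (β a)) (cr (αM m) x) - cr (cl (β a) (αM m)) (β x) =
    cr (αM (βM m)) (c (α a) x) - cr (cr (βM m) (α a)) (β x))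

/-- for a BiHom-commutative BiHom-associative algebra, an algebra map
`ξ` and a `lam`-`(ξ,ξ)`-derivation `D` (with `α, β, ξ, D` pairwise commuting), the
product `a * b = ξ(a)D(b) + κ ξ(a)ξ(b)` makes `(A, *, αξ, βξ)` a BiHom-pre-Lie
algebra and a BiHom-Novikov algebra. -/
theorem stmt11 (K A : Type*) [Field K] [AddCommGroup A] [Module K A] (lam κ : K)
    (μ : A →ₗ[K] A →ₗ[K] A) (α β ξ D : A →ₗ[K] A)
    (hαmul : ∀ a b, α (μ a b) = μ (α a) (α b))
    (hβmul : ∀ a b, β (μ a b) = μ (β a) (β b))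
    (hassoc : ∀ a b c, μ (α a) (μ b c) = μ (μ a b) (β c))
    (hcommut : ∀ a b, μ (β a) (α b) = μ (β b) (α a))
    (hξ : ∀ a b, ξ (μ a b) = μ (ξ a) (ξ b))
    (hD : ∀ a b, D (μ a b) = μ (ξ a) (D b) + μ (D a) (ξ b) + lam • μ (ξ a) (ξ b))
    (hpair : ∀ f ∈ ([α, β, ξ, D] : List (A →ₗ[K] A)),
      ∀ g ∈ ([α, β, ξ, D] : List (A →ₗ[K] A)), ∀ a, f (g a) = g (f a))
    (star : A →ₗ[K] A →ₗ[K] A)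
    (hstar : ∀ a b, star a b = μ (ξ a) (D b) + κ • μ (ξ a) (ξ b)) :
    BHPreLie star (α ∘ₗ ξ) (β ∘ₗ ξ) ∧ BHNovikov star (α ∘ₗ ξ) (β ∘ₗ ξ) := by

  -- extract pairwise commutation facts
  have cβα : ∀ y, β (α y) = α (β y) := fun y => hpair β (by simp) α (by simp) y
  have cξα : ∀ y, ξ (α y) = α (ξ y) := fun y => hpair ξ (by simp) α (by simp) y
  have cξβ : ∀ y, ξ (β y) = β (ξ y) := fun y => hpair ξ (by simp) β (by simp) y
  have cDα : ∀ y, D (α y) = α (D y) := fun y => hpair D (by simp) α (by simp) y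
  have cDβ : ∀ y, D (β y) = β (D y) := fun y => hpair D (by simp) β (by simp) y
  have cDξ : ∀ y, D (ξ y) = ξ (D y) := fun y => hpair D (by simp) ξ (by simp) y
  have key : ∀ u v w, μ (μ u (β v)) (α (β w)) = μ (μ u (β w)) (α (β v)) := by
    intro u v w
    calc μ (μ u (β v)) (α (β w)) = μ (μ u (β v)) (β (α w)) := by rw [← cβα]
      _ = μ (α u) (μ (β v) (α w)) := (hassoc u (β v) (α w)).symm
      _ = μ (α u) (μ (β w) (α v)) := by rw [hcommut]
      _ = μ (μ u (β w)) (β (α v)) := hassoc u (β w) (α v)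
      _ = μ (μ u (β w)) (α (β v)) := by rw [cβα]
  have hPL : BHPreLie star (α ∘ₗ ξ) (β ∘ₗ ξ) := by
    refine ⟨?_, ?_, ?_, ?_⟩
    · intro a
      simp only [LinearMap.comp_apply, cξα, cξβ, cβα]
    · intro a b
      simp only [LinearMap.comp_apply, hstar, map_add, map_smul, hαmul, hξ,
        cξα, cξβ, cDα, cDβ, cDξ, cβα]
    · intro a b
      simp only [LinearMap.comp_apply, hstar, map_add, map_smul, hβmul, hξ,
        cξα, cξβ, cDα, cDβ, cDξ, cβα]
    · intro a b x
      simp only [LinearMap.comp_apply, hstar, map_add, map_smul, smul_add,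
        LinearMap.add_apply, LinearMap.smul_apply, hD, hξ, hαmul, hβmul,
        cξα, cξβ, cDα, cDβ, cDξ, cβα, hassoc]
      rw [hcommut (ξ (ξ (ξ a))) (ξ (ξ (ξ b)))]
      module
  refine ⟨hPL, hPL, ?_⟩
  intro a b x
  simp only [LinearMap.comp_apply, hstar, map_add, map_smul, smul_add,
    LinearMap.add_apply, LinearMap.smul_apply, hD, hξ, hαmul, hβmul,
    cξα, cξβ, cDα, cDβ, cDξ, cβα]
  rw [key (ξ (ξ a)) (ξ (ξ (D b))) (ξ (ξ (D x))),
    key (ξ (ξ a)) (ξ (ξ (ξ b))) (ξ (ξ (D x))),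
    key (ξ (ξ a)) (ξ (ξ (D b))) (ξ (ξ (ξ x))),
    key (ξ (ξ a)) (ξ (ξ (ξ b))) (ξ (ξ (ξ x)))]
  module
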